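/- arXiv:math/0603531 — 7 statements merged into one kernel-verified Lean document; each statement's English description precedes it below -/
import Mathlib

section
/- There exists an invertible matrix W in M_2(ℤ[t]) such that evaluating t at 0 gives the identity matrix and evaluating t at 1 gives the rotation matrix [[0,-1],[1,0]]. Concretely, W = [[1-t², t³-2t],[t, 1-t²]] is such a matrix, with inverse [[1-t², 2t-t³],[-t, 1-t²]]. -/
/-! `det W0 = (1 - t²)² - t (t³ - 2t) = 1`, so `W0` is invertible over `ℤ[t]` with inverse its
adjugate, which is `W0inv`. -/

open Polynomial

noncomputable def W0 : Matrix (Fin 2) (Fin 2) (Polynomial ℤ) :=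
  !![1 - X ^ 2, X ^ 3 - 2 * X; X, 1 - X ^ 2]

noncomputable def W0inv : Matrix (Fin 2) (Fin 2) (Polynomial ℤ) :=
  !![1 - X ^ 2, 2 * X - X ^ 3; -X, 1 - X ^ 2]

theorem W0_det : W0.det = 1 := by
  rw [W0, Matrix.det_fin_two_of]
  ring

theorem W0_adjugate : W0.adjugate = W0inv := by
  rw [W0, W0inv, Matrix.adjugate_fin_two_of]
  simp only [neg_sub]

theorem W0_mul_W0inv : W0 * W0inv = 1 := by
  rw [← W0_adjugate, Matrix.mul_adjugate, W0_det, one_smul]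

theorem W0inv_mul_W0 : W0inv * W0 = 1 := by
  rw [← W0_adjugate, Matrix.adjugate_mul, W0_det, one_smul]

theorem W0_map_eval_zero : W0.map (eval 0) = 1 := by
  ext i j
  fin_cases i <;> fin_cases j <;> simp [W0]

theorem W0_map_eval_one : W0.map (eval 1) = !![0, -1; 1, 0] := by
  ext i j
  fin_cases i <;> fin_cases j <;> simp [W0]

/-- There exists an invertible matrix `W ∈ M₂(ℤ[t])` with `ev₀ W = 1` and
`ev₁ W = [[0,-1],[1,0]]`; concretely `W0` is such a matrix, with inverse `W0inv`. -/
theorem stmt0 :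
    (∃ W : Matrix (Fin 2) (Fin 2) (Polynomial ℤ), IsUnit W ∧
      W.map (Polynomial.eval 0) = 1 ∧
      W.map (Polynomial.eval 1) = !![0, -1; 1, 0]) ∧
    W0 * W0inv = 1 ∧ W0inv * W0 = 1 ∧
    W0.map (Polynomial.eval 0) = 1 ∧
    W0.map (Polynomial.eval 1) = !![0, -1; 1, 0] := by
  have hW0 : IsUnit W0 := (Matrix.isUnit_iff_isUnit_det W0).2 (W0_det ▸ isUnit_one)
  exact ⟨⟨W0, hW0, W0_map_eval_zero, W0_map_eval_one⟩,
    W0_mul_W0inv, W0inv_mul_W0, W0_map_eval_zero, W0_map_eval_one⟩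
end

section
/- There is no orthogonal matrix W ∈ M_2(ℤ[t]) (i.e., satisfying W·Wᵀ = 1) such that evaluation at t=0 gives the identity matrix and evaluation at t=1 gives [[0,-1],[1,0]]. -/
open Polynomial

lemma coeff_sq_two_mul (a : Polynomial ℤ) (k : ℕ) (hk : a.natDegree ≤ k) :
    (a ^ 2).coeff (2 * k) = (a.coeff k) ^ 2 := by
  rw [sq, sq, coeff_mul, Finset.sum_eq_single ((k, k) : ℕ × ℕ)]
  · intro p hp hne
    rw [Finset.HasAntidiagonal.mem_antidiagonal] at hp
    rcases lt_or_ge k p.1 with h | h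
    · rw [coeff_eq_zero_of_natDegree_lt (lt_of_le_of_lt hk h), zero_mul]
    · have h2 : k < p.2 := by
        have : p.1 ≠ k ∨ p.2 ≠ k := by
          by_contra hc
          push_neg at hc
          exact hne (Prod.ext hc.1 hc.2)
        omega
      rw [coeff_eq_zero_of_natDegree_lt (lt_of_le_of_lt hk h2), mul_zero]
  · intro h
    exact absurd (Finset.HasAntidiagonal.mem_antidiagonal.2 (by omega)) h

lemma natDegree_eq_zero_of_sq_add_sq (a b : Polynomial ℤ) (h : a ^ 2 + b ^ 2 = 1) :
    a.natDegree = 0 := by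
  by_contra ha
  set k := max a.natDegree b.natDegree with hkdef
  have hk : 0 < k := lt_of_lt_of_le (Nat.pos_of_ne_zero ha) (le_max_left _ _)
  have h1 := coeff_sq_two_mul a k (le_max_left _ _)
  have h2 := coeff_sq_two_mul b k (le_max_right _ _)
  have h0 : (a ^ 2 + b ^ 2).coeff (2 * k) = 0 := by
    rw [h, coeff_one, if_neg (by omega)]
  rw [coeff_add, h1, h2] at h0
  have ha2 : a.coeff k ^ 2 = 0 := by
    nlinarith [sq_nonneg (a.coeff k), sq_nonneg (b.coeff k)]
  have hb2 : b.coeff k ^ 2 = 0 := by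
    nlinarith [sq_nonneg (a.coeff k), sq_nonneg (b.coeff k)]
  have hane : a ≠ 0 := fun h0 => ha (by simp [h0])
  rcases le_or_gt b.natDegree a.natDegree with hle | hlt
  · have hka : k = a.natDegree := by omega
    have : a.coeff k ≠ 0 := by
      rw [hka]
      exact mt leadingCoeff_eq_zero.mp hane
    exact this ((pow_eq_zero_iff two_ne_zero).mp ha2)
  · have hkb : k = b.natDegree := by omega
    have hbne : b ≠ 0 := fun h0 => by simp [h0, hkdef] at hkb; omega
    have : b.coeff k ≠ 0 := by
      rw [hkb]
      exact mt leadingCoeff_eq_zero.mp hbne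
    exact this ((pow_eq_zero_iff two_ne_zero).mp hb2)

/-- There is no orthogonal matrix `W ∈ M₂(ℤ[t])` (i.e. `W * Wᵀ = 1`) with
`ev₀ W = 1` and `ev₁ W = [[0,-1],[1,0]]`. -/
theorem stmt1 :
    ¬ ∃ W : Matrix (Fin 2) (Fin 2) (Polynomial ℤ),
      W * W.transpose = 1 ∧
      W.map (Polynomial.eval 0) = 1 ∧
      W.map (Polynomial.eval 1) = !![0, -1; 1, 0] := by
  rintro ⟨W, horth, h0, h1⟩
  have hentry : (W * W.transpose) 0 0 = (1 : Matrix (Fin 2) (Fin 2) (Polynomial ℤ)) 0 0 := by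
    rw [horth]
  rw [Matrix.mul_apply, Fin.sum_univ_two] at hentry
  simp only [Matrix.transpose_apply, Matrix.one_apply_eq] at hentry
  have hsq : (W 0 0) ^ 2 + (W 0 1) ^ 2 = 1 := by ring_nf; ring_nf at hentry; linear_combination hentry
  have hdeg := natDegree_eq_zero_of_sq_add_sq _ _ hsq
  obtain ⟨c, hc⟩ := natDegree_eq_zero.mp hdeg
  have he0 : (W.map (Polynomial.eval 0)) 0 0 = (1 : Matrix (Fin 2) (Fin 2) ℤ) 0 0 := by rw [h0]
  have he1 : (W.map (Polynomial.eval 1)) 0 0 = (!![0, -1; 1, 0] : Matrix (Fin 2) (Fin 2) ℤ) 0 0 := by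
    rw [h1]
  simp [Matrix.map_apply, ← hc] at he0 he1
  omega
end

section
/- Define φ^∞ : Γ(A) → Γ(A) by φ^∞(a) = Σ_{k≥0} β₂^k β₁ a α₁ α₂^k, i.e., the matrix whose (2^{k+1}i + 2^k − 1, 2^{k+1}j + 2^k − 1) entry is a_{ij} and all other entries 0. Then φ^∞ is a well-defined ring endomorphism of Γ(A), and it satisfies β₁ a α₁ + β₂ φ^∞(a) α₂ = φ^∞(a) for all a (i.e., 1 ⊕ φ^∞ = φ^∞), making Γ(A) an infinite sum ring. -/
variable {A : Type} [Ring A]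

/-- The defining condition of `Γ(A)`. -/
def gCond (a : ℕ × ℕ → A) : Prop :=
  (Set.range a).Finite ∧
  ∃ N : ℕ, ∀ i : ℕ,
    {j | a (i, j) ≠ 0}.Finite ∧ {j | a (i, j) ≠ 0}.ncard ≤ N ∧
    {j | a (j, i) ≠ 0}.Finite ∧ {j | a (j, i) ≠ 0}.ncard ≤ N

/-- Matrix multiplication in `Γ(A)`. -/
noncomputable def gMul (a b : ℕ × ℕ → A) : ℕ × ℕ → A :=
  fun p => ∑ᶠ j, a (p.1, j) * b (j, p.2)

/-- `α₁ = Σ_i e_{i,2i}`. -/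
def alpha1 : ℕ × ℕ → A := fun p => if p.2 = 2 * p.1 then 1 else 0
/-- `β₁ = Σ_i e_{2i,i}`. -/
def beta1 : ℕ × ℕ → A := fun p => if p.1 = 2 * p.2 then 1 else 0
/-- `α₂ = Σ_i e_{i,2i+1}`. -/
def alpha2 : ℕ × ℕ → A := fun p => if p.2 = 2 * p.1 + 1 then 1 else 0
/-- `β₂ = Σ_i e_{2i+1,i}`. -/
def beta2 : ℕ × ℕ → A := fun p => if p.1 = 2 * p.2 + 1 then 1 else 0

/-- The injection `(k,i) ↦ 2^{k+1} i + 2^k − 1`. -/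
def emb : ℕ × ℕ → ℕ := fun q => 2 ^ (q.1 + 1) * q.2 + 2 ^ q.1 - 1

open Classical in
/-- `φ^∞(a) = Σ_k β₂^k β₁ a α₁ α₂^k`: the matrix whose
`(2^{k+1}i + 2^k − 1, 2^{k+1}j + 2^k − 1)` entry is `a_{ij}`, all other entries `0`. -/
noncomputable def phiInf (a : ℕ × ℕ → A) : ℕ × ℕ → A := fun p =>
  if h : ∃ q : ℕ × ℕ × ℕ, emb (q.1, q.2.1) = p.1 ∧ emb (q.1, q.2.2) = p.2
  then a (h.choose.2.1, h.choose.2.2) else 0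

/-! Every positive integer is uniquely `2 ^ k * (2 * i + 1)`, and `emb (k, i) + 1` is exactly
this number, so `emb` is injective and `φ^∞ a` is a copy of `a` on each of the disjoint index
blocks `emb (k, ·)`. Entries from different blocks never meet in a matrix product, which gives
additivity, multiplicativity and the row and column bounds of `Γ(A)`.

Since `emb (0, i) = 2 * i` and `emb (k + 1, i) = 2 * emb (k, i) + 1`, the even–even part of
`φ^∞ a` is `a`, its odd–odd part is `φ^∞ a` again and its mixed-parity entries vanish; this is
precisely the block shape of `β₁ a α₁ + β₂ φ^∞(a) α₂`. -/

lemma finite_and_ncard_le_of_subset_image {α β : Type*} {S : Set α} {T : Set β} {f : β → α}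
    (hT : T.Finite) (hS : S ⊆ f '' T) : S.Finite ∧ S.ncard ≤ T.ncard :=
  ⟨(hT.image f).subset hS, (Set.ncard_le_ncard hS (hT.image f)).trans (Set.ncard_image_le hT)⟩

lemma finsum_eq_finsum_comp_of_support_subset_range {α β M : Type*} [AddCommMonoid M]
    {f : α → M} {g : β → α} (hg : Function.Injective g) (h : Function.support f ⊆ Set.range g) :
    ∑ᶠ a, f a = ∑ᶠ b, f (g b) := by
  rw [← finsum_mem_range hg, ← finsum_mem_univ]
  exact finsum_mem_inter_support_eq' f _ _ fun x hx => ⟨fun _ => h hx, fun _ => trivial⟩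

lemma emb_add_one (k i : ℕ) : emb (k, i) + 1 = 2 ^ k * (2 * i + 1) := by
  have : 1 ≤ 2 ^ k := Nat.one_le_two_pow
  rw [show emb (k, i) = 2 ^ (k + 1) * i + 2 ^ k - 1 from rfl, Nat.sub_add_cancel (by omega)]
  ring

lemma padicValNat_emb_add_one (k i : ℕ) : padicValNat 2 (emb (k, i) + 1) = k := by
  rw [emb_add_one, padicValNat.mul (by positivity) (by omega), padicValNat.prime_pow,
    padicValNat.eq_zero_of_not_dvd (by omega), add_zero]

lemma emb_injective : Function.Injective emb := by
  rintro ⟨k, i⟩ ⟨k', i'⟩ h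
  obtain rfl : k = k' := by
    rw [← padicValNat_emb_add_one k i, ← padicValNat_emb_add_one k' i', h]
  have h' := emb_add_one k i
  rw [h, emb_add_one] at h'
  have := Nat.eq_of_mul_eq_mul_left (by positivity) h'
  simp only [Prod.mk.injEq, true_and]
  omega

lemma emb_zero_left (i : ℕ) : emb (0, i) = 2 * i := by
  simp only [emb]
  omega

lemma emb_succ_left (k i : ℕ) : emb (k + 1, i) = 2 * emb (k, i) + 1 := by
  have h := emb_add_one (k + 1) i
  rw [pow_succ, mul_right_comm, ← emb_add_one] at h
  omega

section PhiInf

variable (a : ℕ × ℕ → A)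

lemma phiInf_emb (k i j : ℕ) : phiInf a (emb (k, i), emb (k, j)) = a (i, j) := by
  have h : ∃ q : ℕ × ℕ × ℕ, emb (q.1, q.2.1) = emb (k, i) ∧ emb (q.1, q.2.2) = emb (k, j) :=
    ⟨(k, i, j), rfl, rfl⟩
  obtain ⟨h₁, h₂⟩ := h.choose_spec
  simp only [phiInf, dif_pos h]
  rw [(Prod.mk.inj (emb_injective h₁)).2, (Prod.mk.inj (emb_injective h₂)).2]

lemma phiInf_eq_zero (p : ℕ × ℕ) (h : ∀ k i j : ℕ, p ≠ (emb (k, i), emb (k, j))) :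
    phiInf a p = 0 :=
  dif_neg fun ⟨⟨k, i, j⟩, h₁, h₂⟩ => h k i j (Prod.ext h₁.symm h₂.symm)

variable {a}

lemma exists_emb_of_phiInf_ne_zero {p : ℕ × ℕ} (h : phiInf a p ≠ 0) :
    ∃ k i j : ℕ, p = (emb (k, i), emb (k, j)) := by
  by_contra! hp
  exact h (phiInf_eq_zero a p hp)

lemma exists_emb_of_phiInf_emb_left_ne_zero {k i m : ℕ} (h : phiInf a (emb (k, i), m) ≠ 0) :
    ∃ l, m = emb (k, l) ∧ a (i, l) ≠ 0 := by
  obtain ⟨k', i', l, hp⟩ := exists_emb_of_phiInf_ne_zero h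
  obtain ⟨rfl, rfl⟩ := Prod.mk.inj (emb_injective (Prod.mk.inj hp).1)
  rw [hp, phiInf_emb] at h
  exact ⟨l, (Prod.mk.inj hp).2, h⟩

lemma exists_emb_of_phiInf_emb_right_ne_zero {k j m : ℕ} (h : phiInf a (m, emb (k, j)) ≠ 0) :
    ∃ l, m = emb (k, l) ∧ a (l, j) ≠ 0 := by
  obtain ⟨k', l, j', hp⟩ := exists_emb_of_phiInf_ne_zero h
  obtain ⟨rfl, rfl⟩ := Prod.mk.inj (emb_injective (Prod.mk.inj hp).2)
  rw [hp, phiInf_emb] at h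
  exact ⟨l, (Prod.mk.inj hp).1, h⟩

variable (a)

lemma range_phiInf_subset : Set.range (phiInf a) ⊆ insert 0 (Set.range a) := by
  rintro _ ⟨p, rfl⟩
  by_cases h : phiInf a p = 0
  · exact Or.inl h
  · obtain ⟨k, i, j, rfl⟩ := exists_emb_of_phiInf_ne_zero h
    exact Or.inr ⟨(i, j), (phiInf_emb a k i j).symm⟩

lemma exists_row_support_phiInf_subset (r : ℕ) :
    ∃ k m, {j | phiInf a (r, j) ≠ 0} ⊆ (fun l => emb (k, l)) '' {l | a (m, l) ≠ 0} := by
  by_cases h : ∃ j, phiInf a (r, j) ≠ 0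
  · obtain ⟨j, hj⟩ := h
    obtain ⟨k, m, _, hp⟩ := exists_emb_of_phiInf_ne_zero hj
    obtain rfl : r = emb (k, m) := (Prod.mk.inj hp).1
    refine ⟨k, m, fun j hj => ?_⟩
    obtain ⟨l, rfl, hl⟩ := exists_emb_of_phiInf_emb_left_ne_zero hj
    exact ⟨l, hl, rfl⟩
  · push Not at h
    exact ⟨0, 0, fun j hj => absurd (h j) hj⟩

lemma exists_col_support_phiInf_subset (c : ℕ) :
    ∃ k m, {j | phiInf a (j, c) ≠ 0} ⊆ (fun l => emb (k, l)) '' {l | a (l, m) ≠ 0} := by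
  by_cases h : ∃ j, phiInf a (j, c) ≠ 0
  · obtain ⟨j, hj⟩ := h
    obtain ⟨k, _, m, hp⟩ := exists_emb_of_phiInf_ne_zero hj
    obtain rfl : c = emb (k, m) := (Prod.mk.inj hp).2
    refine ⟨k, m, fun j hj => ?_⟩
    obtain ⟨l, rfl, hl⟩ := exists_emb_of_phiInf_emb_right_ne_zero hj
    exact ⟨l, hl, rfl⟩
  · push Not at h
    exact ⟨0, 0, fun j hj => absurd (h j) hj⟩

lemma gCond_phiInf {a : ℕ × ℕ → A} (ha : gCond a) : gCond (phiInf a) := by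
  obtain ⟨hrange, N, hN⟩ := ha
  refine ⟨(hrange.insert 0).subset (range_phiInf_subset a), N, fun r => ?_⟩
  obtain ⟨k, m, hrow⟩ := exists_row_support_phiInf_subset a r
  obtain ⟨k', m', hcol⟩ := exists_col_support_phiInf_subset a r
  obtain ⟨hrowFin, hrowCard, -, -⟩ := hN m
  obtain ⟨-, -, hcolFin, hcolCard⟩ := hN m'
  obtain ⟨hrowFin', hrowCard'⟩ := finite_and_ncard_le_of_subset_image hrowFin hrow
  obtain ⟨hcolFin', hcolCard'⟩ := finite_and_ncard_le_of_subset_image hcolFin hcol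
  exact ⟨hrowFin', hrowCard'.trans hrowCard, hcolFin', hcolCard'.trans hcolCard⟩

lemma phiInf_add (b : ℕ × ℕ → A) : phiInf (a + b) = phiInf a + phiInf b := by
  funext p
  by_cases h : ∃ k i j : ℕ, p = (emb (k, i), emb (k, j))
  · obtain ⟨k, i, j, rfl⟩ := h
    simp only [Pi.add_apply, phiInf_emb]
  · push Not at h
    simp only [Pi.add_apply, phiInf_eq_zero _ _ h, add_zero]

lemma gMul_phiInf_apply_emb (b : ℕ × ℕ → A) (k i j : ℕ) :
    gMul (phiInf a) (phiInf b) (emb (k, i), emb (k, j)) = gMul a b (i, j) := by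
  have hsupp : Function.support (fun m => phiInf a (emb (k, i), m) * phiInf b (m, emb (k, j)))
      ⊆ Set.range fun l => emb (k, l) := fun m hm => by
    obtain ⟨l, rfl, -⟩ := exists_emb_of_phiInf_emb_left_ne_zero (left_ne_zero_of_mul hm)
    exact ⟨l, rfl⟩
  rw [gMul, finsum_eq_finsum_comp_of_support_subset_range
    (fun _ _ h => (Prod.mk.inj (emb_injective h)).2) hsupp]
  simp only [phiInf_emb, gMul]

lemma gMul_phiInf_eq_zero (b : ℕ × ℕ → A) (p : ℕ × ℕ)
    (h : ∀ k i j : ℕ, p ≠ (emb (k, i), emb (k, j))) : gMul (phiInf a) (phiInf b) p = 0 := by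
  refine finsum_eq_zero_of_forall_eq_zero fun m => ?_
  by_contra hm
  obtain ⟨k, i, l, hp⟩ := exists_emb_of_phiInf_ne_zero (left_ne_zero_of_mul hm)
  have hb := right_ne_zero_of_mul hm
  rw [(Prod.mk.inj hp).2] at hb
  obtain ⟨j, hj, -⟩ := exists_emb_of_phiInf_emb_left_ne_zero (a := b) hb
  exact h k i j (Prod.ext (Prod.mk.inj hp).1 hj)

lemma phiInf_gMul (b : ℕ × ℕ → A) : phiInf (gMul a b) = gMul (phiInf a) (phiInf b) := by
  funext p
  by_cases h : ∃ k i j : ℕ, p = (emb (k, i), emb (k, j))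
  · obtain ⟨k, i, j, rfl⟩ := h
    rw [phiInf_emb, gMul_phiInf_apply_emb]
  · push Not at h
    rw [phiInf_eq_zero _ _ h, gMul_phiInf_eq_zero a b p h]

lemma phiInf_two_mul_two_mul (i j : ℕ) : phiInf a (2 * i, 2 * j) = a (i, j) := by
  rw [← emb_zero_left, ← emb_zero_left, phiInf_emb]

lemma phiInf_two_mul_add_one_two_mul_add_one (i j : ℕ) :
    phiInf a (2 * i + 1, 2 * j + 1) = phiInf a (i, j) := by
  by_cases h : ∃ k i' j' : ℕ, (i, j) = (emb (k, i'), emb (k, j'))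
  · obtain ⟨k, i', j', hij⟩ := h
    obtain ⟨rfl, rfl⟩ := Prod.mk.inj hij
    rw [← emb_succ_left, ← emb_succ_left, phiInf_emb, phiInf_emb]
  · push Not at h
    rw [phiInf_eq_zero a (i, j) h, phiInf_eq_zero]
    rintro (_ | k) i' j' hp <;> simp only [Prod.mk.injEq] at hp
    · rw [emb_zero_left] at hp
      omega
    · rw [emb_succ_left, emb_succ_left] at hp
      exact h k i' j' (Prod.ext (by omega) (by omega))

lemma phiInf_of_mod_two_ne {r c : ℕ} (h : r % 2 ≠ c % 2) : phiInf a (r, c) = 0 := by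
  refine phiInf_eq_zero a _ fun k i j hp => ?_
  simp only [Prod.mk.injEq] at hp
  cases k with
  | zero => rw [emb_zero_left, emb_zero_left] at hp; omega
  | succ k => rw [emb_succ_left, emb_succ_left] at hp; omega

end PhiInf

section Shifts

variable (x : ℕ × ℕ → A) (i j : ℕ)

lemma gMul_apply_of_row_eq_single {s : ℕ × ℕ → A} {r : ℕ}
    (hs : ∀ l, s (r, l) = if l = i then 1 else 0) : gMul s x (r, j) = x (i, j) := by
  rw [gMul, finsum_eq_single _ i fun l hl => by rw [hs, if_neg hl, zero_mul], hs, if_pos rfl,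
    one_mul]

lemma gMul_apply_of_row_eq_zero {s : ℕ × ℕ → A} {r : ℕ} (hs : ∀ l, s (r, l) = 0) :
    gMul s x (r, j) = 0 :=
  finsum_eq_zero_of_forall_eq_zero fun l => by rw [hs, zero_mul]

lemma gMul_apply_of_col_eq_single {s : ℕ × ℕ → A} {c : ℕ}
    (hs : ∀ l, s (l, c) = if l = j then 1 else 0) : gMul x s (i, c) = x (i, j) := by
  rw [gMul, finsum_eq_single _ j fun l hl => by rw [hs, if_neg hl, mul_zero], hs, if_pos rfl,
    mul_one]

lemma gMul_apply_of_col_eq_zero {s : ℕ × ℕ → A} {c : ℕ} (hs : ∀ l, s (l, c) = 0) :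
    gMul x s (i, c) = 0 :=
  finsum_eq_zero_of_forall_eq_zero fun l => by rw [hs, mul_zero]

lemma gMul_beta1_apply_two_mul : gMul beta1 x (2 * i, j) = x (i, j) :=
  gMul_apply_of_row_eq_single x i j fun _ => if_congr (by omega) rfl rfl

lemma gMul_beta1_apply_two_mul_add_one : gMul beta1 x (2 * i + 1, j) = 0 :=
  gMul_apply_of_row_eq_zero x j fun _ => if_neg (by omega)

lemma gMul_beta2_apply_two_mul_add_one : gMul beta2 x (2 * i + 1, j) = x (i, j) :=
  gMul_apply_of_row_eq_single x i j fun _ => if_congr (by omega) rfl rfl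

lemma gMul_beta2_apply_two_mul : gMul beta2 x (2 * i, j) = 0 :=
  gMul_apply_of_row_eq_zero x j fun _ => if_neg (by omega)

lemma gMul_alpha1_apply_two_mul : gMul x alpha1 (i, 2 * j) = x (i, j) :=
  gMul_apply_of_col_eq_single x i j fun _ => if_congr (by omega) rfl rfl

lemma gMul_alpha1_apply_two_mul_add_one : gMul x alpha1 (i, 2 * j + 1) = 0 :=
  gMul_apply_of_col_eq_zero x i fun _ => if_neg (by omega)

lemma gMul_alpha2_apply_two_mul_add_one : gMul x alpha2 (i, 2 * j + 1) = x (i, j) :=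
  gMul_apply_of_col_eq_single x i j fun _ => if_congr (by omega) rfl rfl

lemma gMul_alpha2_apply_two_mul : gMul x alpha2 (i, 2 * j) = 0 :=
  gMul_apply_of_col_eq_zero x i fun _ => if_neg (by omega)

end Shifts

lemma one_oplus_phiInf_eq (a : ℕ × ℕ → A) :
    gMul (gMul beta1 a) alpha1 + gMul (gMul beta2 (phiInf a)) alpha2 = phiInf a := by
  funext ⟨r, c⟩
  obtain ⟨i, rfl | rfl⟩ := Nat.even_or_odd' r <;> obtain ⟨j, rfl | rfl⟩ := Nat.even_or_odd' c <;>
    simp only [Pi.add_apply, gMul_alpha1_apply_two_mul, gMul_alpha1_apply_two_mul_add_one,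
      gMul_alpha2_apply_two_mul, gMul_alpha2_apply_two_mul_add_one, gMul_beta1_apply_two_mul,
      gMul_beta1_apply_two_mul_add_one, gMul_beta2_apply_two_mul,
      gMul_beta2_apply_two_mul_add_one, add_zero, zero_add]
  · exact (phiInf_two_mul_two_mul a i j).symm
  · exact (phiInf_of_mod_two_ne a (by omega)).symm
  · exact (phiInf_of_mod_two_ne a (by omega)).symm
  · exact (phiInf_two_mul_add_one_two_mul_add_one a i j).symm

/-- `φ^∞` has the announced matrix entries, preserves the cone condition, is a
(non-unital) ring endomorphism of `Γ(A)`, and satisfies `1 ⊕ φ^∞ = φ^∞`, that is,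
`β₁ a α₁ + β₂ φ^∞(a) α₂ = φ^∞(a)`; this makes `Γ(A)` an infinite sum ring. -/
theorem stmt9 :
    (∀ (a : ℕ × ℕ → A) (k i j : ℕ), phiInf a (emb (k, i), emb (k, j)) = a (i, j)) ∧
    (∀ (a : ℕ × ℕ → A) (p : ℕ × ℕ),
      (∀ k i j : ℕ, p ≠ (emb (k, i), emb (k, j))) → phiInf a p = 0) ∧
    (∀ a : ℕ × ℕ → A, gCond a → gCond (phiInf a)) ∧
    (∀ a b : ℕ × ℕ → A, phiInf (a + b) = phiInf a + phiInf b) ∧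
    (∀ a b : ℕ × ℕ → A, gCond a → gCond b →
      phiInf (gMul a b) = gMul (phiInf a) (phiInf b)) ∧
    (∀ a : ℕ × ℕ → A, gCond a →
      gMul (gMul beta1 a) alpha1 + gMul (gMul beta2 (phiInf a)) alpha2 = phiInf a) :=
  ⟨phiInf_emb, phiInf_eq_zero, fun _ => gCond_phiInf, phiInf_add,
    fun a b _ _ => phiInf_gMul a b, fun a _ => one_oplus_phiInf_eq a⟩
end

section
/- In a sum ring A (a unital ring with elements α₁,α₂,β₁,β₂ satisfying α₁β₁ = α₂β₂ = 1 and β₁α₁ + β₂α₂ = 1), there exists an invertible 3×3 matrix Q ∈ M₃(A) such that Q · diag(a ⊕ b, 0, 0) · Q⁻¹ = diag(a, b, 0) for all a, b ∈ A, where a ⊕ b := β₁aα₁ + β₂bα₂. -/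
/-! The column `(α₁, α₂)ᵀ` and the row `(β₁, β₂)` realise `A ≅ A²` as right `A`-modules, under
which left multiplication by `a ⊕ b` becomes `diag(a, b)`. Padding both maps by one more
coordinate turns them into mutually inverse `3 × 3` matrices
`Q = [[α₁,0,0],[α₂,0,0],[0,β₁,β₂]]` and `Q' = [[β₁,β₂,0],[0,0,α₁],[0,0,α₂]]`; conjugating by
them moves `a ⊕ b` from the corner to the block `diag(a, b)`. -/

open Matrix

structure IsSumRingStructure {A : Type*} [Ring A] (α₁ α₂ β₁ β₂ : A) : Prop where
  α₁_mul_β₁ : α₁ * β₁ = 1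
  α₂_mul_β₂ : α₂ * β₂ = 1
  β₁_mul_α₁_add_β₂_mul_α₂ : β₁ * α₁ + β₂ * α₂ = 1

namespace IsSumRingStructure

variable {A : Type*} [Ring A] {α₁ α₂ β₁ β₂ : A}

theorem swap (h : IsSumRingStructure α₁ α₂ β₁ β₂) : IsSumRingStructure α₂ α₁ β₂ β₁ :=
  ⟨h.α₂_mul_β₂, h.α₁_mul_β₁, by rw [add_comm, h.β₁_mul_α₁_add_β₂_mul_α₂]⟩

theorem α₁_mul_β₂ (h : IsSumRingStructure α₁ α₂ β₁ β₂) : α₁ * β₂ = 0 := by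
  have hsum : α₁ * β₂ = α₁ * β₂ + α₁ * β₂ :=
    calc α₁ * β₂ = α₁ * (β₁ * α₁ + β₂ * α₂) * β₂ := by
          rw [h.β₁_mul_α₁_add_β₂_mul_α₂, mul_one]
      _ = (α₁ * β₁) * (α₁ * β₂) + (α₁ * β₂) * (α₂ * β₂) := by noncomm_ring
      _ = α₁ * β₂ + α₁ * β₂ := by rw [h.α₁_mul_β₁, h.α₂_mul_β₂, one_mul, mul_one]
  simpa using hsum

theorem α₂_mul_β₁ (h : IsSumRingStructure α₁ α₂ β₁ β₂) : α₂ * β₁ = 0 :=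
  h.swap.α₁_mul_β₂

theorem α₁_mul_sum_mul_β₁ (h : IsSumRingStructure α₁ α₂ β₁ β₂) (a b : A) :
    α₁ * (β₁ * a * α₁ + β₂ * b * α₂) * β₁ = a := by
  calc α₁ * (β₁ * a * α₁ + β₂ * b * α₂) * β₁
      = (α₁ * β₁) * a * (α₁ * β₁) + (α₁ * β₂) * b * (α₂ * β₁) := by noncomm_ring
    _ = a := by rw [h.α₁_mul_β₁, h.α₁_mul_β₂, one_mul, mul_one, zero_mul, zero_mul, add_zero]

theorem α₁_mul_sum_mul_β₂ (h : IsSumRingStructure α₁ α₂ β₁ β₂) (a b : A) :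
    α₁ * (β₁ * a * α₁ + β₂ * b * α₂) * β₂ = 0 := by
  calc α₁ * (β₁ * a * α₁ + β₂ * b * α₂) * β₂
      = (α₁ * β₁) * a * (α₁ * β₂) + (α₁ * β₂) * b * (α₂ * β₂) := by noncomm_ring
    _ = 0 := by rw [h.α₁_mul_β₂, mul_zero, zero_mul, zero_mul, add_zero]

theorem α₂_mul_sum_mul_β₂ (h : IsSumRingStructure α₁ α₂ β₁ β₂) (a b : A) :
    α₂ * (β₁ * a * α₁ + β₂ * b * α₂) * β₂ = b := by
  rw [add_comm]
  exact h.swap.α₁_mul_sum_mul_β₁ b a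

theorem α₂_mul_sum_mul_β₁ (h : IsSumRingStructure α₁ α₂ β₁ β₂) (a b : A) :
    α₂ * (β₁ * a * α₁ + β₂ * b * α₂) * β₁ = 0 := by
  rw [add_comm]
  exact h.swap.α₁_mul_sum_mul_β₂ b a

end IsSumRingStructure

section WagonerMatrices

variable {A : Type*} [Ring A] (α₁ α₂ β₁ β₂ : A)

def wagonerMatrix : Matrix (Fin 3) (Fin 3) A := !![α₁, 0, 0; α₂, 0, 0; 0, β₁, β₂]

def wagonerMatrixInv : Matrix (Fin 3) (Fin 3) A := !![β₁, β₂, 0; 0, 0, α₁; 0, 0, α₂]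

theorem wagonerMatrix_mul_wagonerMatrixInv :
    wagonerMatrix α₁ α₂ β₁ β₂ * wagonerMatrixInv α₁ α₂ β₁ β₂ =
      !![α₁ * β₁, α₁ * β₂, 0; α₂ * β₁, α₂ * β₂, 0; 0, 0, β₁ * α₁ + β₂ * α₂] := by
  simp only [wagonerMatrix, wagonerMatrixInv, mul_fin_three, mul_zero, zero_mul, add_zero,
    zero_add]

theorem wagonerMatrixInv_mul_wagonerMatrix :
    wagonerMatrixInv α₁ α₂ β₁ β₂ * wagonerMatrix α₁ α₂ β₁ β₂ =
      !![β₁ * α₁ + β₂ * α₂, 0, 0; 0, α₁ * β₁, α₁ * β₂; 0, α₂ * β₁, α₂ * β₂] := by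
  simp only [wagonerMatrix, wagonerMatrixInv, mul_fin_three, mul_zero, zero_mul, add_zero,
    zero_add]

theorem wagonerMatrix_mul_diagonal_mul_wagonerMatrixInv (c : A) :
    wagonerMatrix α₁ α₂ β₁ β₂ * diagonal ![c, 0, 0] * wagonerMatrixInv α₁ α₂ β₁ β₂ =
      !![α₁ * c * β₁, α₁ * c * β₂, 0; α₂ * c * β₁, α₂ * c * β₂, 0; 0, 0, 0] := by
  simp only [wagonerMatrix, wagonerMatrixInv, diagonal_vec3, mul_fin_three, mul_zero, zero_mul,
    add_zero]

end WagonerMatrices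

/-- Wagoner's lemma: in a sum ring `A` (with `α₁β₁ = α₂β₂ = 1`, `β₁α₁ + β₂α₂ = 1`),
there exists an invertible `3×3` matrix `Q` such that
`Q · diag(a ⊕ b, 0, 0) · Q⁻¹ = diag(a, b, 0)` for all `a, b ∈ A`, where
`a ⊕ b = β₁aα₁ + β₂bα₂`. -/
theorem stmt11 (A : Type) [Ring A] (α₁ α₂ β₁ β₂ : A)
    (h1 : α₁ * β₁ = 1) (h2 : α₂ * β₂ = 1) (h3 : β₁ * α₁ + β₂ * α₂ = 1) :
    ∃ Q Q' : Matrix (Fin 3) (Fin 3) A,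
      Q * Q' = 1 ∧ Q' * Q = 1 ∧
      ∀ a b : A,
        Q * Matrix.diagonal ![β₁ * a * α₁ + β₂ * b * α₂, 0, 0] * Q' =
          Matrix.diagonal ![a, b, 0] := by
  have h : IsSumRingStructure α₁ α₂ β₁ β₂ := ⟨h1, h2, h3⟩
  refine ⟨wagonerMatrix α₁ α₂ β₁ β₂, wagonerMatrixInv α₁ α₂ β₁ β₂, ?_, ?_, fun a b => ?_⟩
  · rw [wagonerMatrix_mul_wagonerMatrixInv, h1, h2, h3, h.α₁_mul_β₂, h.α₂_mul_β₁, one_fin_three]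
  · rw [wagonerMatrixInv_mul_wagonerMatrix, h1, h2, h3, h.α₁_mul_β₂, h.α₂_mul_β₁, one_fin_three]
  · rw [wagonerMatrix_mul_diagonal_mul_wagonerMatrixInv, h.α₁_mul_sum_mul_β₁,
      h.α₁_mul_sum_mul_β₂, h.α₂_mul_sum_mul_β₁, h.α₂_mul_sum_mul_β₂, diagonal_vec3]
end

section
/- Let E be a functor from rings to abelian groups that is split-exact (sends split extensions to split short exact sequences). If f, g : A → B are ring homomorphisms satisfying f(a)g(b) = 0 and g(a)f(b) = 0 for all a,b ∈ A, then f + g : A → B is a ring homomorphism and E(f + g) = E(f) + E(g). -/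
/-- Let `E` be a functor from (nonunital) rings to abelian groups which is split-exact:
it sends every split extension to a split-exact sequence of abelian groups. If
`f, g : A → B` are ring homomorphisms with `f(a)g(b) = g(a)f(b) = 0` for all `a, b`,
then `f + g` is a ring homomorphism and `E(f + g) = E(f) + E(g)`. -/
theorem stmt16
    (E : (R : Type) → [inst : NonUnitalRing R] → Type)
    [instE : ∀ (R : Type) [inst : NonUnitalRing R], AddCommGroup (E R)]
    (Emap : {R S : Type} → [instR : NonUnitalRing R] → [instS : NonUnitalRing S] →
      (R →ₙ+* S) → (E R →+ E S))
    (hid : ∀ (R : Type) [inst : NonUnitalRing R],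
      Emap (NonUnitalRingHom.id R) = AddMonoidHom.id (E R))
    (hcomp : ∀ {R S T : Type} [instR : NonUnitalRing R] [instS : NonUnitalRing S]
      [instT : NonUnitalRing T] (f : R →ₙ+* S) (g : S →ₙ+* T),
      Emap (g.comp f) = (Emap g).comp (Emap f))
    (hsplit : ∀ {I R S : Type} [instI : NonUnitalRing I] [instR : NonUnitalRing R]
      [instS : NonUnitalRing S] (i : I →ₙ+* R) (p : R →ₙ+* S) (s : S →ₙ+* R),
      Function.Injective i → Function.Surjective p →
      (∀ r : R, p r = 0 ↔ r ∈ Set.range i) → (∀ x : S, p (s x) = x) →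
      Function.Injective (Emap i) ∧ Function.Surjective (Emap p) ∧
      (∀ y : E R, Emap p y = 0 ↔ y ∈ Set.range (Emap i)))
    {A B : Type} [NonUnitalRing A] [NonUnitalRing B] (f g : A →ₙ+* B)
    (hfg : ∀ a b : A, f a * g b = 0) (hgf : ∀ a b : A, g a * f b = 0) :
    ∃ h : A →ₙ+* B, (∀ a : A, h a = f a + g a) ∧ Emap h = Emap f + Emap g := by
  classical
  -- subrings generated by ranges
  set F : NonUnitalSubring B := NonUnitalSubring.closure (Set.range f) with hF
  set G : NonUnitalSubring B := NonUnitalSubring.closure (Set.range g) with hG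
  -- orthogonality of the closures
  have key : ∀ x ∈ F, ∀ y ∈ G, x * y = 0 ∧ y * x = 0 := by
    intro x hx
    induction hx using NonUnitalSubring.closure_induction with
    | mem x hx =>
      obtain ⟨a, rfl⟩ := hx
      intro y hy
      induction hy using NonUnitalSubring.closure_induction with
      | mem y hy => obtain ⟨b, rfl⟩ := hy; exact ⟨hfg a b, hgf b a⟩
      | zero => simp
      | add y z _ _ ihy ihz =>
        exact ⟨by rw [mul_add, ihy.1, ihz.1, add_zero],
               by rw [add_mul, ihy.2, ihz.2, add_zero]⟩
      | neg y _ ihy => exact ⟨by rw [mul_neg, ihy.1, neg_zero], by rw [neg_mul, ihy.2, neg_zero]⟩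
      | mul y z _ _ ihy ihz =>
        exact ⟨by rw [← mul_assoc, ihy.1, zero_mul], by rw [mul_assoc, ihz.2, mul_zero]⟩
    | zero => intro y hy; simp
    | add x z _ _ ihx ihz =>
      intro y hy
      exact ⟨by rw [add_mul, (ihx y hy).1, (ihz y hy).1, add_zero],
             by rw [mul_add, (ihx y hy).2, (ihz y hy).2, add_zero]⟩
    | neg x _ ihx =>
      intro y hy
      exact ⟨by rw [neg_mul, (ihx y hy).1, neg_zero], by rw [mul_neg, (ihx y hy).2, neg_zero]⟩
    | mul x z _ hz ihx ihz =>
      intro y hy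
      refine ⟨by rw [mul_assoc, (ihz y hy).1, mul_zero], by rw [← mul_assoc, (ihx y hy).2, zero_mul]⟩
  -- the sum map μ : F × G → B
  have μmul : ∀ p q : ↥F × ↥G,
      ((p * q).1 : B) + ((p * q).2 : B) = ((p.1 : B) + p.2) * ((q.1 : B) + q.2) := by
    intro p q
    have h1 : (p.1 : B) * (q.2 : B) = 0 := (key _ p.1.2 _ q.2.2).1
    have h2 : (p.2 : B) * (q.1 : B) = 0 := (key _ q.1.2 _ p.2.2).2
    show (p.1 : B) * q.1 + (p.2 : B) * q.2 = _
    rw [add_mul, mul_add, mul_add, h1, h2, add_zero, zero_add]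
  let μ : ↥F × ↥G →ₙ+* B :=
    { toFun := fun p => (p.1 : B) + (p.2 : B)
      map_mul' := fun p q => μmul p q
      map_zero' := by simp
      map_add' := by intro p q; show ((p.1 : B) + q.1) + ((p.2 : B) + q.2) = _; rw [add_add_add_comm] }
  -- the diagonal-ish map φ
  have hfF : ∀ a, f a ∈ F := fun a => NonUnitalSubring.subset_closure ⟨a, rfl⟩
  have hgG : ∀ a, g a ∈ G := fun a => NonUnitalSubring.subset_closure ⟨a, rfl⟩
  let f' : A →ₙ+* ↥F := NonUnitalRingHom.codRestrict f F hfF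
  let g' : A →ₙ+* ↥G := NonUnitalRingHom.codRestrict g G hgG
  let φ : A →ₙ+* ↥F × ↥G := f'.prod g'
  -- inclusions and projections
  let inl : ↥F →ₙ+* ↥F × ↥G := (NonUnitalRingHom.id _).prod 0
  let inr : ↥G →ₙ+* ↥F × ↥G := (0 : ↥G →ₙ+* ↥F).prod (NonUnitalRingHom.id _)
  let fst := NonUnitalRingHom.fst ↥F ↥G
  let snd := NonUnitalRingHom.snd ↥F ↥G
  -- E of the zero ring is trivial
  have hpunit : ∀ y : E PUnit, y = 0 := by
    obtain ⟨-, -, hker⟩ := hsplit (NonUnitalRingHom.id PUnit) (NonUnitalRingHom.id PUnit)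
      (NonUnitalRingHom.id PUnit) (fun a b h => h) (fun x => ⟨x, rfl⟩)
      (by intro r; exact ⟨fun _ => ⟨0, Subsingleton.elim _ _⟩, fun _ => Subsingleton.elim _ _⟩)
      (fun x => rfl)
    intro y
    have := (hker y).mpr ⟨y, by rw [hid]; rfl⟩
    rwa [hid] at this
  -- E kills zero maps
  have hzero : ∀ {R S : Type} [NonUnitalRing R] [NonUnitalRing S] (y : E R),
      Emap (0 : R →ₙ+* S) y = 0 := by
    intro R S _ _ y
    have hfact : (0 : R →ₙ+* S) = (0 : PUnit →ₙ+* S).comp (0 : R →ₙ+* PUnit) := by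
      ext x; rfl
    rw [hfact, hcomp]
    show Emap (0 : PUnit →ₙ+* S) (Emap (0 : R →ₙ+* PUnit) y) = 0
    rw [hpunit (Emap (0 : R →ₙ+* PUnit) y), map_zero]
  -- split exactness of 0 → F → F × G → G → 0
  obtain ⟨hinj, hsurj, hker⟩ := hsplit inl snd inr
    (fun a b h => congrArg Prod.fst h)
    (fun x => ⟨inr x, rfl⟩)
    (by
      intro r
      constructor
      · intro h; exact ⟨r.1, Prod.ext rfl h.symm⟩
      · rintro ⟨x, rfl⟩; rfl)
    (fun x => rfl)
  -- decomposition of identity on E (F × G)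
  have hdecomp : ∀ y : E (↥F × ↥G),
      y = Emap inl (Emap fst y) + Emap inr (Emap snd y) := by
    intro y
    have h1 : Emap snd (y - Emap inr (Emap snd y)) = 0 := by
      rw [map_sub]
      have : Emap snd (Emap inr (Emap snd y)) = Emap snd y := by
        have : (Emap snd).comp (Emap inr) = AddMonoidHom.id _ := by
          rw [← hcomp]
          have : snd.comp inr = NonUnitalRingHom.id _ := by ext x; rfl
          rw [this, hid]
        calc Emap snd (Emap inr (Emap snd y))
            = ((Emap snd).comp (Emap inr)) (Emap snd y) := rfl
          _ = Emap snd y := by rw [this]; rfl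
      rw [this, sub_self]
    obtain ⟨x, hx⟩ := (hker _).mp h1
    have hx1 : x = Emap fst y := by
      have h2 : Emap fst (Emap inl x) = x := by
        have : (Emap fst).comp (Emap inl) = AddMonoidHom.id _ := by
          rw [← hcomp]
          have : fst.comp inl = NonUnitalRingHom.id _ := by ext x; rfl
          rw [this, hid]
        calc Emap fst (Emap inl x) = ((Emap fst).comp (Emap inl)) x := rfl
          _ = x := by rw [this]; rfl
      have h3 : Emap fst (Emap inr (Emap snd y)) = 0 := by
        have : Emap fst (Emap inr (Emap snd y))
            = Emap (fst.comp inr) (Emap snd y) := by rw [hcomp]; rfl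
        rw [this]
        have : fst.comp inr = 0 := by ext x; rfl
        rw [this]
        exact hzero _
      rw [hx, map_sub, h3, sub_zero] at h2
      exact h2.symm
    rw [hx1] at hx
    rw [hx]
    abel
  -- the sum homomorphism
  refine ⟨μ.comp φ, fun a => rfl, ?_⟩
  ext x
  have e1 : Emap (μ.comp φ) x = Emap μ (Emap φ x) := by rw [hcomp]; rfl
  have e2 : Emap φ x = Emap inl (Emap fst (Emap φ x)) + Emap inr (Emap snd (Emap φ x)) :=
    hdecomp _
  have ef : Emap fst (Emap φ x) = Emap f' x := by
    have : fst.comp φ = f' := by ext a; rfl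
    rw [show Emap fst (Emap φ x) = Emap (fst.comp φ) x by rw [hcomp]; rfl, this]
  have eg : Emap snd (Emap φ x) = Emap g' x := by
    have : snd.comp φ = g' := by ext a; rfl
    rw [show Emap snd (Emap φ x) = Emap (snd.comp φ) x by rw [hcomp]; rfl, this]
  have ecf : Emap μ (Emap inl (Emap f' x)) = Emap f x := by
    rw [show Emap μ (Emap inl (Emap f' x)) = Emap (μ.comp (inl.comp f')) x by
      rw [hcomp, hcomp]; rfl]
    have : μ.comp (inl.comp f') = f := by ext a; show f a + (0 : B) = f a; rw [add_zero]
    rw [this]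
  have ecg : Emap μ (Emap inr (Emap g' x)) = Emap g x := by
    rw [show Emap μ (Emap inr (Emap g' x)) = Emap (μ.comp (inr.comp g')) x by
      rw [hcomp, hcomp]; rfl]
    have : μ.comp (inr.comp g') = g := by ext a; show (0 : B) + g a = g a; rw [zero_add]
    rw [this]
  rw [e1, e2, map_add, ef, eg, ecf, ecg]
  rfl
end

section
/- Let E be an M₂-stable functor from rings to abelian groups (the inclusion into the upper-left corner ι : A → M₂(A) induces an isomorphism E(A) ≅ E(M₂(A)) for all A). Let B be a ring, A ⊆ B a subring, and V, W ∈ B elements such that WA ⊆ A, VA ⊆ A, and aVWa' = aa' for all a,a' ∈ A. Then φ : A → A, φ(a) = WaV, is a ring homomorphism, and E(φ) = id_{E(A)}. -/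
/-- The upper-left corner inclusion `A → M₂(A)`. -/
noncomputable def corner (R : Type) [NonUnitalRing R] :
    R →ₙ+* Matrix (Fin 2) (Fin 2) R where
  toFun a := Matrix.single 0 0 a
  map_zero' := by
    simp [Matrix.single_zero]
  map_add' a b := by
    simp [Matrix.single_add]
  map_mul' a b := by
    rw [Matrix.single_mul_single_same]

section Stmt17Aux

/-- Corner inclusion at a diagonal position `p`. -/
noncomputable def cornerAt {n : Type} [Fintype n] [DecidableEq n] (p : n)
    (R : Type) [NonUnitalRing R] : R →ₙ+* Matrix n n R where
  toFun a := Matrix.single p p a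
  map_zero' := by simp
  map_add' a b := by simp [Matrix.single_add]
  map_mul' a b := by rw [Matrix.single_mul_single_same]

theorem cornerAt_apply {n : Type} [Fintype n] [DecidableEq n] (p : n)
    (R : Type) [NonUnitalRing R] (a : R) :
    cornerAt p R a = Matrix.single p p a := rfl

/-- The permutation automorphism of a matrix ring. -/
noncomputable def permHom {n : Type} [Fintype n] [DecidableEq n] (e : n ≃ n)
    (R : Type) [NonUnitalRing R] : Matrix n n R →ₙ+* Matrix n n R where
  toFun M := M.submatrix e.symm e.symm
  map_zero' := rfl
  map_add' _ _ := rfl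
  map_mul' M N := (Matrix.submatrix_mul_equiv M N _ e.symm _).symm

theorem permHom_comp {n : Type} [Fintype n] [DecidableEq n] (e f : n ≃ n)
    (R : Type) [NonUnitalRing R] :
    (permHom e R).comp (permHom f R) = permHom (f.trans e) R := by
  ext M i j
  rfl

theorem permHom_refl {n : Type} [Fintype n] [DecidableEq n]
    (R : Type) [NonUnitalRing R] :
    permHom (Equiv.refl n) R = NonUnitalRingHom.id _ := by
  ext M i j
  rfl

theorem permHom_cornerAt {n : Type} [Fintype n] [DecidableEq n] (e : n ≃ n) (p : n)
    (R : Type) [NonUnitalRing R] :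
    (permHom e R).comp (cornerAt p R) = cornerAt (e p) R := by
  ext a i j
  show (Matrix.single p p a).submatrix e.symm e.symm i j
      = Matrix.single (e p) (e p) a i j
  simp [Matrix.single, Equiv.eq_symm_apply]

/-- Flattening `M₂(M₂(R)) → M₄(R)` as a non-unital ring hom. -/
noncomputable def flatHom (R : Type) [NonUnitalRing R] :
    Matrix (Fin 2) (Fin 2) (Matrix (Fin 2) (Fin 2) R) →ₙ+*
      Matrix (Fin 2 × Fin 2) (Fin 2 × Fin 2) R where
  toFun M := Matrix.of fun ik jl => M ik.1 jl.1 ik.2 jl.2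
  map_zero' := rfl
  map_add' _ _ := rfl
  map_mul' M N := by
    ext ⟨i, k⟩ ⟨j, l⟩
    show (M * N) i j k l = _
    simp [Matrix.mul_apply, Matrix.sum_apply, Fintype.sum_prod_type]

/-- Unflattening `M₄(R) → M₂(M₂(R))` as a non-unital ring hom. -/
noncomputable def flatInv (R : Type) [NonUnitalRing R] :
    Matrix (Fin 2 × Fin 2) (Fin 2 × Fin 2) R →ₙ+*
      Matrix (Fin 2) (Fin 2) (Matrix (Fin 2) (Fin 2) R) where
  toFun N := Matrix.of fun i j => Matrix.of fun k l => N (i, k) (j, l)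
  map_zero' := rfl
  map_add' _ _ := rfl
  map_mul' M N := by
    ext i j k l
    show (M * N) (i, k) (j, l) = _
    simp [Matrix.mul_apply, Matrix.sum_apply, Fintype.sum_prod_type]

theorem flatInv_flatHom (R : Type) [NonUnitalRing R] :
    (flatInv R).comp (flatHom R) = NonUnitalRingHom.id _ := rfl

theorem flatHom_flatInv (R : Type) [NonUnitalRing R] :
    (flatHom R).comp (flatInv R) = NonUnitalRingHom.id _ := rfl

theorem corner_eq_cornerAt (R : Type) [NonUnitalRing R] :
    corner R = cornerAt (0 : Fin 2) R := rfl

theorem flat_corner_cornerAt (R : Type) [NonUnitalRing R] (k : Fin 2) :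
    (flatHom R).comp ((cornerAt (0 : Fin 2) (Matrix (Fin 2) (Fin 2) R)).comp (cornerAt k R))
      = cornerAt ((0 : Fin 2), k) R := by
  ext a ⟨i, x⟩ ⟨j, y⟩
  show (Matrix.single (0 : Fin 2) 0 (Matrix.single k k a)) i j x y
      = Matrix.single ((0 : Fin 2), k) ((0 : Fin 2), k) a (i, x) (j, y)
  simp only [Matrix.single, Matrix.of_apply, Prod.mk.injEq]
  split_ifs <;> aesop

section Sandwich

variable {B : Type} [NonUnitalRing B] (A : NonUnitalSubring B) (V W : B)
  (hW : ∀ a ∈ A, W * a ∈ A) (hV : ∀ a ∈ A, a * V ∈ A)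
  (hVW : ∀ a ∈ A, ∀ a' ∈ A, a * V * W * a' = a * a')

/-- `φ(a) = W a V`. -/
noncomputable def sandphi : A →ₙ+* A where
  toFun a := ⟨W * a * V, hV _ (hW _ a.2)⟩
  map_zero' := by ext; simp
  map_add' a b := by ext; simp [mul_add, add_mul]
  map_mul' a b := by
    have h : (W * (a : B)) * V * W * (b : B) = (W * (a : B)) * (b : B) :=
      hVW _ (hW _ a.2) _ b.2
    ext
    push_cast
    calc W * ((a : B) * (b : B)) * V = (W * (a : B)) * V * W * (b : B) * V := by
          rw [h]; noncomm_ring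
      _ = W * (a : B) * V * (W * (b : B) * V) := by noncomm_ring

/-- The sandwich endomorphism of `M₂(A)` with weights `(1, W)` and `(1, V)`. -/
noncomputable def sandpsi : Matrix (Fin 2) (Fin 2) A →ₙ+* Matrix (Fin 2) (Fin 2) A where
  toFun X := Matrix.of
    ![![X 0 0, ⟨(X 0 1 : B) * V, hV _ (X 0 1).2⟩],
      ![⟨W * (X 1 0 : B), hW _ (X 1 0).2⟩, ⟨W * (X 1 1 : B) * V, hV _ (hW _ (X 1 1).2)⟩]]
  map_zero' := by
    ext i j
    fin_cases i <;> fin_cases j <;> simp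
  map_add' X Y := by
    ext i j
    fin_cases i <;> fin_cases j <;> (push_cast; simp [mul_add, add_mul])
  map_mul' X Y := by
    have hkey : ∀ x ∈ A, ∀ y ∈ A, x * (V * (W * y)) = x * y := by
      intro x hx y hy
      have := hVW x hx y hy
      rwa [mul_assoc, mul_assoc] at this
    ext i j
    fin_cases i <;> fin_cases j <;>
      (simp only [Matrix.mul_apply, Fin.sum_univ_two];
       push_cast;
       simp only [Matrix.of_apply, Matrix.cons_val', Matrix.cons_val_zero, Matrix.cons_val_one,
         Matrix.head_cons, Matrix.head_fin_const, Matrix.empty_val'];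
       push_cast;
       simp only [mul_add, add_mul, mul_assoc])
    · rw [hkey _ (X 0 1).2 _ (Y 1 0).2]
    · rw [hkey _ (X 0 1).2 _ (hV _ (Y 1 1).2)]
    · rw [hkey _ (X 1 1).2 _ (Y 1 0).2]
    · rw [hkey _ (X 1 1).2 _ (hV _ (Y 1 1).2)]

theorem sandphi_apply (a : A) :
    (sandphi A V W hW hV hVW a : B) = W * (a : B) * V := rfl

theorem sandpsi_apply (X : Matrix (Fin 2) (Fin 2) A) :
    sandpsi A V W hW hV hVW X = Matrix.of
      ![![X 0 0, ⟨(X 0 1 : B) * V, hV _ (X 0 1).2⟩],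
        ![⟨W * (X 1 0 : B), hW _ (X 1 0).2⟩,
          ⟨W * (X 1 1 : B) * V, hV _ (hW _ (X 1 1).2)⟩]] := rfl

theorem sandpsi_corner0 :
    (sandpsi A V W hW hV hVW).comp (cornerAt (0 : Fin 2) A) = cornerAt (0 : Fin 2) A := by
  ext a i j
  fin_cases i <;> fin_cases j <;>
    simp [sandpsi_apply, cornerAt_apply, Matrix.single]

theorem sandpsi_corner1 :
    (sandpsi A V W hW hV hVW).comp (cornerAt (1 : Fin 2) A)
      = (cornerAt (1 : Fin 2) A).comp (sandphi A V W hW hV hVW) := by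
  ext a i j
  fin_cases i <;> fin_cases j <;>
    simp [sandpsi_apply, sandphi_apply, cornerAt_apply, Matrix.single]

end Sandwich

end Stmt17Aux


/-- Let `E` be an `M₂`-stable functor from (nonunital) rings to abelian groups. Let
`A ⊆ B` be a subring and `V, W ∈ B` with `W·A ⊆ A`, `A·V ⊆ A` and `aVWa' = aa'` for all
`a, a' ∈ A`. Then `φ(a) = WaV` is a ring endomorphism of `A` and `E(φ) = id`. -/
theorem stmt17
    (E : (R : Type) → [inst : NonUnitalRing R] → Type)
    [instE : ∀ (R : Type) [inst : NonUnitalRing R], AddCommGroup (E R)]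
    (Emap : {R S : Type} → [instR : NonUnitalRing R] → [instS : NonUnitalRing S] →
      (R →ₙ+* S) → (E R →+ E S))
    (hid : ∀ (R : Type) [inst : NonUnitalRing R],
      Emap (NonUnitalRingHom.id R) = AddMonoidHom.id (E R))
    (hcomp : ∀ {R S T : Type} [instR : NonUnitalRing R] [instS : NonUnitalRing S]
      [instT : NonUnitalRing T] (f : R →ₙ+* S) (g : S →ₙ+* T),
      Emap (g.comp f) = (Emap g).comp (Emap f))
    (hM2 : ∀ (R : Type) [inst : NonUnitalRing R], Function.Bijective (Emap (corner R)))
    {B : Type} [NonUnitalRing B] (A : NonUnitalSubring B) (V W : B)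
    (hW : ∀ a ∈ A, W * a ∈ A) (hV : ∀ a ∈ A, a * V ∈ A)
    (hVW : ∀ a ∈ A, ∀ a' ∈ A, a * V * W * a' = a * a') :
    ∃ φ : A →ₙ+* A,
      (∀ a : A, (φ a : B) = W * (a : B) * V) ∧
      Emap φ = AddMonoidHom.id (E A) := by
  classical
  refine ⟨sandphi A V W hW hV hVW, fun a => rfl, ?_⟩
  -- pointwise versions of functoriality
  have key : ∀ {R S T : Type} [NonUnitalRing R] [NonUnitalRing S] [NonUnitalRing T]
      (f : R →ₙ+* S) (g : S →ₙ+* T) (x : E R),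
      Emap (g.comp f) x = Emap g (Emap f x) := by
    intro R S T _ _ _ f g x
    rw [hcomp]
    rfl
  have hid' : ∀ (R : Type) [NonUnitalRing R] (x : E R),
      Emap (NonUnitalRingHom.id R) x = x := by
    intro R _ x
    rw [hid]
    rfl
  -- bijectivity of the basic corner maps
  have hA : Function.Bijective (Emap (cornerAt (0 : Fin 2) ↥A)) := by
    rw [← corner_eq_cornerAt]; exact hM2 _
  have hMA : Function.Bijective
      (Emap (cornerAt (0 : Fin 2) (Matrix (Fin 2) (Fin 2) ↥A))) := by
    rw [← corner_eq_cornerAt]; exact hM2 _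
  have hfl : Function.Bijective (Emap (flatHom ↥A)) := by
    apply Function.bijective_iff_has_inverse.mpr
    refine ⟨Emap (flatInv ↥A), fun x => ?_, fun x => ?_⟩
    · rw [← key, flatInv_flatHom, hid']
    · rw [← key, flatHom_flatInv, hid']
  -- the corner of M₄ at the position (0,0)
  have hJ0 : ∀ (k : Fin 2) (x : E ↥A),
      Emap (cornerAt (((0 : Fin 2), k) : Fin 2 × Fin 2) ↥A) x
        = Emap (flatHom ↥A) (Emap (cornerAt (0 : Fin 2) (Matrix (Fin 2) (Fin 2) ↥A))
            (Emap (cornerAt k ↥A) x)) := by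
    intro k x
    rw [← flat_corner_cornerAt, key, key]
  have hJsurj : Function.Surjective
      (Emap (cornerAt (((0 : Fin 2), (0 : Fin 2)) : Fin 2 × Fin 2) ↥A)) := by
    intro z
    obtain ⟨z1, hz1⟩ := hfl.surjective z
    obtain ⟨z2, hz2⟩ := hMA.surjective z1
    obtain ⟨z3, hz3⟩ := hA.surjective z2
    exact ⟨z3, by rw [hJ0, hz3, hz2, hz1]⟩
  -- permutations of Fin 2 × Fin 2 fixing (0,0) act trivially
  have stab : ∀ (e : (Fin 2 × Fin 2) ≃ (Fin 2 × Fin 2)),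
      e ((0 : Fin 2), (0 : Fin 2)) = ((0 : Fin 2), (0 : Fin 2)) →
      ∀ x, Emap (permHom e ↥A) x = x := by
    intro e he x
    obtain ⟨y, rfl⟩ := hJsurj x
    rw [← key, permHom_cornerAt, he]
  -- the order 2 / order 3 trick
  set p0 : Fin 2 × Fin 2 := ((0 : Fin 2), (0 : Fin 2)) with hp0
  set p1 : Fin 2 × Fin 2 := ((0 : Fin 2), (1 : Fin 2)) with hp1
  set p2 : Fin 2 × Fin 2 := ((1 : Fin 2), (0 : Fin 2)) with hp2
  set s : (Fin 2 × Fin 2) ≃ (Fin 2 × Fin 2) := Equiv.swap p0 p1 with hs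
  set s' : (Fin 2 × Fin 2) ≃ (Fin 2 × Fin 2) := Equiv.swap p1 p2 with hs'
  set u : (Fin 2 × Fin 2) ≃ (Fin 2 × Fin 2) := s'.trans s with hu
  have hts : ∀ x, Emap (permHom u ↥A) x = Emap (permHom s ↥A) x := by
    intro x
    rw [hu, ← permHom_comp, key, stab s' (by rw [hs', hp0, hp1, hp2]; decide)]
  have ht2 : ∀ x, Emap (permHom s ↥A) (Emap (permHom s ↥A) x) = x := by
    intro x
    rw [← key, permHom_comp]
    have : s.trans s = Equiv.refl _ := by
      apply Equiv.ext; intro z; simp [hs]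
    rw [this, permHom_refl, hid']
  have ht3 : ∀ x, Emap (permHom u ↥A)
      (Emap (permHom u ↥A) (Emap (permHom u ↥A) x)) = x := by
    intro x
    rw [← key, ← key, permHom_comp, permHom_comp]
    have : u.trans (u.trans u) = Equiv.refl _ := by
      apply Equiv.ext
      rw [hu, hs, hs', hp0, hp1, hp2]
      decide
    rw [this, permHom_refl, hid']
  have ht : ∀ x, Emap (permHom s ↥A) x = x := by
    intro x
    have h1 := ht3 x
    rw [hts, hts, hts] at h1
    have h2 := ht2 (Emap (permHom s ↥A) x)
    rw [h2] at h1
    exact h1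
  -- the two corners of M₄ at (0,0) and (0,1) agree on E
  have hc01 : ∀ x, Emap (cornerAt p1 ↥A) x = Emap (cornerAt p0 ↥A) x := by
    intro x
    have hsw : s p0 = p1 := Equiv.swap_apply_left _ _
    rw [← hsw, ← permHom_cornerAt, key, ht]
  -- hence the two corners of M₂ agree on E
  have hiota : ∀ x, Emap (cornerAt (1 : Fin 2) ↥A) x
      = Emap (cornerAt (0 : Fin 2) ↥A) x := by
    intro x
    have h1 := hJ0 1 x
    have h0 := hJ0 0 x
    rw [show (((0 : Fin 2), (1 : Fin 2)) : Fin 2 × Fin 2) = p1 from rfl] at h1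
    rw [show (((0 : Fin 2), (0 : Fin 2)) : Fin 2 × Fin 2) = p0 from rfl] at h0
    have := (hc01 x).symm.trans h1
    rw [h0] at this
    exact hMA.injective (hfl.injective this.symm)
  -- E(Ψ) = id
  have hpsi : ∀ x, Emap (sandpsi A V W hW hV hVW) x = x := by
    intro x
    obtain ⟨y, rfl⟩ := hA.surjective x
    rw [← key, sandpsi_corner0]
  -- conclude
  ext x
  apply hA.injective
  show Emap (cornerAt (0 : Fin 2) ↥A) (Emap (sandphi A V W hW hV hVW) x)
      = Emap (cornerAt (0 : Fin 2) ↥A) x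
  rw [← hiota, ← key, ← sandpsi_corner1, key, hpsi, hiota]
end

section
/- Let ρ : τ → ℤ[t,t⁻¹] be the quotient map from the Toeplitz ring, and τ₀ = ker(ev₁ ∘ ρ), where ev₁ : ℤ[t,t⁻¹] → ℤ evaluates t at 1. Define ψ, φ₂ : τ₀ → τ ⊗ τ by ψ(α) = βα² ⊗ 1, ψ(β) = β²α ⊗ 1, φ₂(α) = α ⊗ 1, φ₂(β) = β ⊗ 1, and φ₁(α) = βα² ⊗ 1 + e ⊗ α, φ₁(β) = β²α ⊗ 1 + (1 − βα) ⊗ β, where e = 1 − βα. Then ψ, φ₁, φ₂ extend to well-defined ring homomorphisms (on τ, restricted to τ₀), and φ₁, φ₂, ψ all agree modulo the ideal M_∞ ⊗ τ, where M_∞ = ker(ρ). -/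
set_option synthInstance.maxHeartbeats 1000000
set_option maxHeartbeats 1000000

open scoped TensorProduct

/-- The relation `αβ = 1` on the free ring on two generators. -/
inductive tRel : FreeAlgebra ℤ Bool → FreeAlgebra ℤ Bool → Prop
  | ab : tRel (FreeAlgebra.ι ℤ true * FreeAlgebra.ι ℤ false) 1

/-- The integral Toeplitz ring `τ = ℤ⟨α,β⟩/(αβ − 1)`. -/
abbrev Toeplitz : Type := RingQuot tRel

/-- The generator `α` of `τ`. -/
noncomputable def al : Toeplitz := RingQuot.mkRingHom tRel (FreeAlgebra.ι ℤ true)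
/-- The generator `β` of `τ`. -/
noncomputable def be : Toeplitz := RingQuot.mkRingHom tRel (FreeAlgebra.ι ℤ false)

/-- The idempotent `e = 1 − βα`. -/
noncomputable def eIdem : Toeplitz := 1 - be * al

/-- The scalar tower `ℤ ℤ τ` for the `RingQuot` algebra structure (no longer found by
instance search, needed by `Algebra.TensorProduct.map`). -/
instance toeplitzIsScalarTower :
    @IsScalarTower ℤ ℤ Toeplitz (Algebra.id ℤ).toSMul (Ring.toIntAlgebra Toeplitz).toSMul
      (RingQuot.instAlgebra tRel).toSMul :=
  ⟨fun a b c => by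
    have h1 := int_smul_eq_zsmul (RingQuot.instAlgebra tRel).toModule
    have h2 := int_smul_eq_zsmul (Ring.toIntAlgebra Toeplitz).toModule
    exact (h1 _ _).trans ((mul_zsmul c a b).trans (by rw [← h1, ← h2]; rfl))⟩

section

noncomputable abbrev toepModule : Module ℤ Toeplitz := (RingQuot.instAlgebra tRel).toModule

attribute [local instance] toepModule

noncomputable def toepHom {S : Type} [Semiring S] [Algebra ℤ S] (A B : S) (h : A * B = 1) :
    Toeplitz →ₐ[ℤ] S :=
  RingQuot.liftAlgHom ℤ ⟨FreeAlgebra.lift ℤ (fun b => cond b A B),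
    by rintro _ _ ⟨⟩; simp [h]⟩

lemma al_eq : al = RingQuot.mkAlgHom ℤ tRel (FreeAlgebra.ι ℤ true) := by
  rw [al, ← RingQuot.mkAlgHom_coe ℤ tRel]; rfl

lemma be_eq : be = RingQuot.mkAlgHom ℤ tRel (FreeAlgebra.ι ℤ false) := by
  rw [be, ← RingQuot.mkAlgHom_coe ℤ tRel]; rfl

@[simp] lemma toepHom_al {S : Type} [Semiring S] [Algebra ℤ S] (A B : S) (h : A * B = 1) :
    toepHom A B h al = A := by
  rw [al_eq, toepHom, RingQuot.liftAlgHom_mkAlgHom_apply]; simp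

@[simp] lemma toepHom_be {S : Type} [Semiring S] [Algebra ℤ S] (A B : S) (h : A * B = 1) :
    toepHom A B h be = B := by
  rw [be_eq, toepHom, RingQuot.liftAlgHom_mkAlgHom_apply]; simp

lemma toep_ext {S : Type} [Semiring S] [Algebra ℤ S] (f g : Toeplitz →ₐ[ℤ] S)
    (ha : f al = g al) (hb : f be = g be) : f = g := by
  apply RingQuot.ringQuot_ext'
  apply FreeAlgebra.hom_ext
  funext b
  cases b
  · simpa [← be_eq] using hb
  · simpa [← al_eq] using ha

lemma al_mul_be : al * be = 1 := by
  have h := RingQuot.mkRingHom_rel tRel.ab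
  simpa [al, be] using h

lemma al_be_cancel (x : Toeplitz) : al * (be * x) = x := by
  rw [← mul_assoc, al_mul_be, one_mul]

lemma rel1 : (be * al ^ 2) * (be ^ 2 * al) = be * al := by
  simp [pow_two, mul_assoc, al_be_cancel]

lemma rel2 : (be * al ^ 2) * (1 - be * al) = 0 := by
  simp [pow_two, mul_sub, mul_assoc, al_be_cancel]

lemma rel3 : (1 - be * al) * (be ^ 2 * al) = 0 := by
  simp [pow_two, sub_mul, mul_assoc, al_be_cancel]

lemma rel4 : (1 - be * al) * (1 - be * al) = 1 - be * al := by
  simp [mul_sub, sub_mul, mul_assoc, al_be_cancel]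

lemma tensor_ab : (al ⊗ₜ[ℤ] (1 : Toeplitz)) * (be ⊗ₜ[ℤ] (1 : Toeplitz)) = 1 := by
  simp [Algebra.TensorProduct.tmul_mul_tmul, al_mul_be, Algebra.TensorProduct.one_def]

lemma tensor_rel1 :
    ((be * al ^ 2) ⊗ₜ[ℤ] (1 : Toeplitz) + eIdem ⊗ₜ[ℤ] al) *
      ((be ^ 2 * al) ⊗ₜ[ℤ] (1 : Toeplitz) + (1 - be * al) ⊗ₜ[ℤ] be) = 1 := by
  simp only [eIdem, mul_add, add_mul, Algebra.TensorProduct.tmul_mul_tmul,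
    rel1, rel2, rel3, rel4, al_mul_be, one_mul, mul_one,
    TensorProduct.zero_tmul, add_zero, zero_add]
  rw [← TensorProduct.add_tmul, Algebra.TensorProduct.one_def]
  congr 1
  abel

lemma tensor_rel3 :
    ((be * al ^ 2) ⊗ₜ[ℤ] (1 : Toeplitz) + eIdem ⊗ₜ[ℤ] (1 : Toeplitz)) *
      ((be ^ 2 * al) ⊗ₜ[ℤ] (1 : Toeplitz) + (1 - be * al) ⊗ₜ[ℤ] (1 : Toeplitz)) = 1 := by
  simp only [eIdem, mul_add, add_mul, Algebra.TensorProduct.tmul_mul_tmul,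
    rel1, rel2, rel3, rel4, al_mul_be, one_mul, mul_one,
    TensorProduct.zero_tmul, add_zero, zero_add]
  rw [← TensorProduct.add_tmul, Algebra.TensorProduct.one_def]
  congr 1
  abel

noncomputable def rhoA : Toeplitz →ₐ[ℤ] LaurentPolynomial ℤ :=
  toepHom (LaurentPolynomial.T 1) (LaurentPolynomial.T (-1))
    (by rw [← LaurentPolynomial.T_add]; norm_num)

noncomputable def epsA : Toeplitz →ₐ[ℤ] ℤ := toepHom 1 1 (mul_one 1)

noncomputable def phi1 : Toeplitz →ₐ[ℤ] Toeplitz ⊗[ℤ] Toeplitz :=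
  toepHom _ _ tensor_rel1

noncomputable def phi2 : Toeplitz →ₐ[ℤ] Toeplitz ⊗[ℤ] Toeplitz :=
  toepHom _ _ tensor_ab

noncomputable def phi3 : Toeplitz →ₐ[ℤ] Toeplitz ⊗[ℤ] Toeplitz :=
  toepHom _ _ tensor_rel3

noncomputable def psi : Toeplitz →ₙ+* Toeplitz ⊗[ℤ] Toeplitz where
  toFun x := (be ⊗ₜ[ℤ] (1 : Toeplitz)) * phi2 x * (al ⊗ₜ[ℤ] (1 : Toeplitz))
  map_mul' x y := by
    calc (be ⊗ₜ[ℤ] (1:Toeplitz)) * phi2 (x * y) * (al ⊗ₜ[ℤ] (1:Toeplitz))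
        = (be ⊗ₜ[ℤ] (1:Toeplitz)) * (phi2 x * (1 * phi2 y)) * (al ⊗ₜ[ℤ] (1:Toeplitz)) := by
          rw [map_mul, one_mul]
      _ = (be ⊗ₜ[ℤ] (1:Toeplitz)) *
            (phi2 x * ((al ⊗ₜ[ℤ] (1:Toeplitz)) * (be ⊗ₜ[ℤ] (1:Toeplitz)) * phi2 y)) *
            (al ⊗ₜ[ℤ] (1:Toeplitz)) := by rw [tensor_ab]
      _ = ((be ⊗ₜ[ℤ] (1:Toeplitz)) * phi2 x * (al ⊗ₜ[ℤ] (1:Toeplitz))) *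
            ((be ⊗ₜ[ℤ] (1:Toeplitz)) * phi2 y * (al ⊗ₜ[ℤ] (1:Toeplitz))) := by
          simp only [mul_assoc]
  map_zero' := by simp
  map_add' x y := by simp [map_add, mul_add, add_mul]

lemma conj_id (z : LaurentPolynomial ℤ ⊗[ℤ] Toeplitz) :
    (LaurentPolynomial.T (-1) ⊗ₜ[ℤ] (1 : Toeplitz)) * z *
      (LaurentPolynomial.T 1 ⊗ₜ[ℤ] (1 : Toeplitz)) = z := by
  induction z using TensorProduct.induction_on with
  | zero => simp
  | tmul p t =>
      simp only [Algebra.TensorProduct.tmul_mul_tmul, one_mul, mul_one]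
      congr 1
      rw [show LaurentPolynomial.T (-1) * p * LaurentPolynomial.T 1
            = p * (LaurentPolynomial.T (-1) * LaurentPolynomial.T 1) by ring,
        ← LaurentPolynomial.T_add]
      norm_num
  | add a b ha hb => rw [mul_add, add_mul, ha, hb]

noncomputable def Fmap : (Toeplitz ⊗[ℤ] Toeplitz) →ₐ[ℤ] LaurentPolynomial ℤ ⊗[ℤ] Toeplitz :=
  Algebra.TensorProduct.map rhoA.toRingHom.toIntAlgHom (AlgHom.id ℤ Toeplitz)

lemma rhoA_al : rhoA al = LaurentPolynomial.T 1 := toepHom_al _ _ _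
lemma rhoA_be : rhoA be = LaurentPolynomial.T (-1) := toepHom_be _ _ _

lemma Fmap_tmul (a b : Toeplitz) : Fmap (a ⊗ₜ[ℤ] b) = rhoA a ⊗ₜ[ℤ] b := rfl

lemma rhoA_e : rhoA (1 - be * al) = 0 := by
  rw [map_sub, map_one, map_mul, rhoA_al, rhoA_be, ← LaurentPolynomial.T_add]
  norm_num

lemma Fphi2 (x : Toeplitz) : Fmap (phi2 x) = rhoA x ⊗ₜ[ℤ] 1 := by
  have : Fmap.comp phi2
      = (Algebra.TensorProduct.includeLeft :
          LaurentPolynomial ℤ →ₐ[ℤ] LaurentPolynomial ℤ ⊗[ℤ] Toeplitz).comp rhoA := by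
    apply toep_ext <;>
      simp [phi2, toepHom_al, toepHom_be, Fmap_tmul, rhoA_al, rhoA_be]
  exact AlgHom.congr_fun this x

lemma rhoA_eIdem : rhoA eIdem = 0 := by rw [eIdem]; exact rhoA_e

lemma rhoA_ba2 : rhoA (be * al ^ 2) = LaurentPolynomial.T 1 := by
  rw [map_mul, map_pow, rhoA_al, rhoA_be, sq, ← LaurentPolynomial.T_add,
    ← LaurentPolynomial.T_add]
  norm_num

lemma rhoA_b2a : rhoA (be ^ 2 * al) = LaurentPolynomial.T (-1) := by
  rw [map_mul, map_pow, rhoA_al, rhoA_be, sq, ← LaurentPolynomial.T_add,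
    ← LaurentPolynomial.T_add]
  norm_num

lemma Fphi1 (x : Toeplitz) : Fmap (phi1 x) = rhoA x ⊗ₜ[ℤ] 1 := by
  have : Fmap.comp phi1 = Fmap.comp phi2 := by
    apply toep_ext <;>
      simp [phi1, phi2, toepHom_al, toepHom_be, map_add, Fmap_tmul, rhoA_eIdem, rhoA_e,
        rhoA_ba2, rhoA_b2a, rhoA_al, rhoA_be, TensorProduct.zero_tmul]
  rw [show Fmap (phi1 x) = (Fmap.comp phi1) x from rfl, this]
  exact Fphi2 x

lemma Fphi3 (x : Toeplitz) : Fmap (phi3 x) = rhoA x ⊗ₜ[ℤ] 1 := by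
  have : Fmap.comp phi3 = Fmap.comp phi2 := by
    apply toep_ext <;>
      simp [phi3, phi2, toepHom_al, toepHom_be, map_add, Fmap_tmul, rhoA_eIdem, rhoA_e,
        rhoA_ba2, rhoA_b2a, rhoA_al, rhoA_be, TensorProduct.zero_tmul]
  rw [show Fmap (phi3 x) = (Fmap.comp phi3) x from rfl, this]
  exact Fphi2 x

lemma Fpsi (x : Toeplitz) : Fmap (psi x) = rhoA x ⊗ₜ[ℤ] 1 := by
  have hx : psi x = (be ⊗ₜ[ℤ] (1 : Toeplitz)) * phi2 x * (al ⊗ₜ[ℤ] (1 : Toeplitz)) := rfl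
  rw [hx, map_mul, map_mul, Fmap_tmul, Fmap_tmul, rhoA_al, rhoA_be, Fphi2, conj_id]

end

/-- `ρ : τ → ℤ[t,t⁻¹]` is the natural quotient map, `ε : τ → ℤ` sends `α,β ↦ 1`
(so `τ₀ = ker ε`). There are homomorphisms `ψ, φ₁, φ₂, φ₃ : τ → τ ⊗ τ` (`ψ` non-unital)
with the prescribed values on generators, and on `τ₀` the maps `φ₁, φ₂, φ₃` all agree
with `ψ` modulo the ideal `M_∞ ⊗ τ = ker(ρ ⊗ id)`. -/
theorem stmt18 :
    ∃ (ρ : Toeplitz →+* LaurentPolynomial ℤ) (ε : Toeplitz →+* ℤ),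
      ρ al = LaurentPolynomial.T 1 ∧ ρ be = LaurentPolynomial.T (-1) ∧
      ε al = 1 ∧ ε be = 1 ∧
      ∃ (ψ : Toeplitz →ₙ+* Toeplitz ⊗[ℤ] Toeplitz)
        (φ₁ φ₂ φ₃ : Toeplitz →+* Toeplitz ⊗[ℤ] Toeplitz),
        ψ al = (be * al ^ 2) ⊗ₜ[ℤ] 1 ∧ ψ be = (be ^ 2 * al) ⊗ₜ[ℤ] 1 ∧
        ψ 1 = (be * al) ⊗ₜ[ℤ] 1 ∧
        φ₁ al = (be * al ^ 2) ⊗ₜ[ℤ] 1 + eIdem ⊗ₜ[ℤ] al ∧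
        φ₁ be = (be ^ 2 * al) ⊗ₜ[ℤ] 1 + (1 - be * al) ⊗ₜ[ℤ] be ∧
        φ₂ al = al ⊗ₜ[ℤ] 1 ∧ φ₂ be = be ⊗ₜ[ℤ] 1 ∧
        φ₃ al = (be * al ^ 2) ⊗ₜ[ℤ] 1 + eIdem ⊗ₜ[ℤ] 1 ∧
        φ₃ be = (be ^ 2 * al) ⊗ₜ[ℤ] 1 + (1 - be * al) ⊗ₜ[ℤ] 1 ∧
        ∀ x : Toeplitz, ε x = 0 →
          (Algebra.TensorProduct.map ρ.toIntAlgHom (AlgHom.id ℤ Toeplitz)) (φ₁ x) =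
            (Algebra.TensorProduct.map ρ.toIntAlgHom (AlgHom.id ℤ Toeplitz)) (ψ x) ∧
          (Algebra.TensorProduct.map ρ.toIntAlgHom (AlgHom.id ℤ Toeplitz)) (φ₂ x) =
            (Algebra.TensorProduct.map ρ.toIntAlgHom (AlgHom.id ℤ Toeplitz)) (ψ x) ∧
          (Algebra.TensorProduct.map ρ.toIntAlgHom (AlgHom.id ℤ Toeplitz)) (φ₃ x) =
            (Algebra.TensorProduct.map ρ.toIntAlgHom (AlgHom.id ℤ Toeplitz)) (ψ x) := by
  letI : Module ℤ Toeplitz := toepModule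
  refine ⟨rhoA.toRingHom, epsA.toRingHom, rhoA_al, rhoA_be, toepHom_al _ _ _, toepHom_be _ _ _,
    psi, phi1.toRingHom, phi2.toRingHom, phi3.toRingHom, ?_, ?_, ?_,
    toepHom_al (S := Toeplitz ⊗[ℤ] Toeplitz) _ _ _, toepHom_be (S := Toeplitz ⊗[ℤ] Toeplitz) _ _ _, toepHom_al (S := Toeplitz ⊗[ℤ] Toeplitz) _ _ _, toepHom_be (S := Toeplitz ⊗[ℤ] Toeplitz) _ _ _,
    toepHom_al (S := Toeplitz ⊗[ℤ] Toeplitz) _ _ _, toepHom_be (S := Toeplitz ⊗[ℤ] Toeplitz) _ _ _, ?_⟩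
  · show (be ⊗ₜ[ℤ] (1 : Toeplitz)) * phi2 al * (al ⊗ₜ[ℤ] (1 : Toeplitz)) = _
    rw [show phi2 al = al ⊗ₜ[ℤ] (1 : Toeplitz) from toepHom_al _ _ _]
    simp [Algebra.TensorProduct.tmul_mul_tmul, pow_two, mul_assoc]
    rfl
  · show (be ⊗ₜ[ℤ] (1 : Toeplitz)) * phi2 be * (al ⊗ₜ[ℤ] (1 : Toeplitz)) = _
    rw [show phi2 be = be ⊗ₜ[ℤ] (1 : Toeplitz) from toepHom_be _ _ _]
    simp [Algebra.TensorProduct.tmul_mul_tmul, pow_two, mul_assoc]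
    rfl
  · show (be ⊗ₜ[ℤ] (1 : Toeplitz)) * phi2 1 * (al ⊗ₜ[ℤ] (1 : Toeplitz)) = _
    rw [map_one]
    simp [Algebra.TensorProduct.one_def, Algebra.TensorProduct.tmul_mul_tmul]
    rfl
  · intro x _
    refine ⟨?_, ?_, ?_⟩
    · show Fmap (phi1 x) = Fmap (psi x)
      rw [Fphi1, Fpsi]
    · show Fmap (phi2 x) = Fmap (psi x)
      rw [Fphi2, Fpsi]
    · show Fmap (phi3 x) = Fmap (psi x)
      rw [Fphi3, Fpsi]
end
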